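/- Suppose the initial point satisfies −Σ_{i=1}^N B_iᵀ λ_i⁰ ∈ ∂g(y⁰), and let {(x^k, y^k, λ^k)} be generated by PG-ADMM (δ_i^k = 0 for all i,k) with constant step sizes c_i^k = c_i ∈ (0, 1/(L_i + γ_i‖A_i‖²)). Fix any (x*, y*, λ*) ∈ χ* and let C := Σ_{i=1}^N [ (1/γ_i)(4‖λ_i*‖² + ‖λ_i⁰‖²) + (1/(2c_i))‖x_i* − x_i⁰‖²_{Q_i} ] + (1/2)‖y* − y⁰‖²_{Σ_{i=1}^N γ_i B_iᵀB_i}, where Q_i = I − c_i γ_i A_iᵀA_i. Then for every t ≥ 1: |F(ū^t) − F(x*,y*)| ≤ C/t and Σ_{i=1}^N ‖λ_i*‖ · ‖A_i x̄_i^t + B_i ȳ^t − b_i‖ ≤ C/t. -/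

import Mathlib

open Finset Matrix MeasureTheory Filter
open scoped RealInnerProductSpace

/-- Matrix–vector multiplication between Euclidean spaces. -/
noncomputable def mvec {m n : Type*} [Fintype m] [Fintype n]
    (A : Matrix m n ℝ) (v : EuclideanSpace ℝ n) : EuclideanSpace ℝ m :=
  WithLp.toLp 2 (A.mulVec v)

/-- The `Q`-quadratic form `‖v‖²_Q = vᵀ Q v`. -/
noncomputable def qnorm {d : Type*} [Fintype d] (Q : Matrix d d ℝ)
    (v : EuclideanSpace ℝ d) : ℝ :=
  ⟪v, mvec Q v⟫

/-- Spectral norm of a matrix. -/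
noncomputable def spec {m n : Type*} [Fintype m] [Fintype n] [DecidableEq n]
    (A : Matrix m n ℝ) : ℝ :=
  ‖LinearMap.toContinuousLinearMap (Matrix.toEuclideanLin A)‖

/-!
The proof is the Lyapunov argument for ADMM. For a multiplier `λ`, the energy
`V_k(λ) = ∑ᵢ (‖x⋆ᵢ - xᵢᵏ‖²_{Qᵢ} / (2cᵢ) + γᵢ/2 ‖Bᵢ(y⋆ - yᵏ)‖² + ‖λᵢ - λᵢᵏ‖² / (2γᵢ))`
is nonnegative under the step-size condition, and one iteration decreases it by at least the
Lagrangian gap `L(xᵏ⁺¹, yᵏ⁺¹, λ) - F(x⋆, y⋆)`. For the `x`-step this follows from the descent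
lemma and the three-point property of the proximal step; for the `y`-step from its optimality
condition `-∑ᵢ Bᵢᵀλᵢᵏ⁺¹ ∈ ∂g(yᵏ⁺¹)`, which the initial condition extends to `k = 0`, so that
monotonicity of `∂g` absorbs the cross terms. Telescoping and Jensen's inequality bound the
Lagrangian gap at the ergodic average by `V₀(λ)/t`. With `λ = 0` this bounds the objective gap
from above; the saddle-point inequality bounds it from below by `-∑ᵢ ⟨λ⋆ᵢ, r̄ᵢ⟩`, where `r̄` is
the averaged residual; and `λᵢ = 2‖λ⋆ᵢ‖ r̄ᵢ / ‖r̄ᵢ‖` yields the infeasibility bound, since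
`V₀(λ) ≤ C` whenever `‖λᵢ‖ ≤ 2‖λ⋆ᵢ‖`.
-/

open scoped InnerProduct

section Convex

variable {E : Type*} [NormedAddCommGroup E] [InnerProductSpace ℝ E]

theorem norm_one_sub_smul_add_smul_sq (p q : E) (t : ℝ) :
    ‖(1 - t) • p + t • q‖ ^ 2
      = (1 - t) * ‖p‖ ^ 2 + t * ‖q‖ ^ 2 - t * (1 - t) * ‖p - q‖ ^ 2 := by
  rw [norm_add_sq_real, norm_sub_sq_real, norm_smul, norm_smul, real_inner_smul_left,
    real_inner_smul_right, Real.norm_eq_abs, Real.norm_eq_abs, mul_pow, mul_pow, sq_abs, sq_abs]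
  ring

theorem ConvexOn.add_add_le_of_isMinOn {D : Set E} {ψ Q : E → ℝ} {u z : E} {S : ℝ}
    (hψ : ConvexOn ℝ D ψ) (hu : u ∈ D) (hz : z ∈ D) (hmin : IsMinOn (fun w => ψ w + Q w) D u)
    (hQ : ∀ t ∈ Set.Ioo (0 : ℝ) 1,
      Q ((1 - t) • u + t • z) = (1 - t) * Q u + t * Q z - t * (1 - t) * S) :
    ψ u + Q u + S ≤ ψ z + Q z := by
  have hseg : ∀ t ∈ Set.Ioo (0 : ℝ) 1, ψ u + Q u + (1 - t) * S ≤ ψ z + Q z := by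
    rintro t ⟨ht0, ht1⟩
    have hmin_t := isMinOn_iff.1 hmin _ (hψ.1 hu hz (sub_nonneg.2 ht1.le) ht0.le (by ring))
    have hψ_t := hψ.2 hu hz (sub_nonneg.2 ht1.le) ht0.le (by ring)
    rw [hQ t ⟨ht0, ht1⟩] at hmin_t
    rw [smul_eq_mul, smul_eq_mul] at hψ_t
    refine le_of_mul_le_mul_left ?_ ht0
    linarith
  have hlim : Tendsto (fun t : ℝ => ψ u + Q u + (1 - t) * S) (nhdsWithin 0 (Set.Ioi 0))
      (nhds (ψ u + Q u + S)) := by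
    have hcont : Continuous fun t : ℝ => ψ u + Q u + (1 - t) * S := by fun_prop
    simpa using (hcont.tendsto 0).mono_left nhdsWithin_le_nhds
  exact le_of_tendsto hlim (eventually_of_mem (Ioo_mem_nhdsGT one_pos) hseg)

variable [CompleteSpace E]

theorem ConvexOn.add_inner_sub_le_of_hasGradientAt {s : Set E} {f : E → ℝ} {g a z : E}
    (hf : ConvexOn ℝ s f) (ha : a ∈ s) (hz : z ∈ s) (hg : HasGradientAt f g a) :
    f a + ⟪g, z - a⟫ ≤ f z := by
  set ℓ : ℝ →ᵃ[ℝ] E := AffineMap.lineMap a z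
  have hline : ConvexOn ℝ (ℓ ⁻¹' s) (f ∘ ℓ) := hf.comp_affineMap ℓ
  have hd : HasDerivAt (f ∘ ℓ) ⟪g, z - a⟫ 0 := by
    have hg' : HasFDerivAt f (InnerProductSpace.toDual ℝ E g) (ℓ 0) := by
      rw [show ℓ 0 = a by simp [ℓ]]
      exact hg.hasFDerivAt
    simpa using hg'.comp_hasDerivAt (0 : ℝ) AffineMap.hasDerivAt_lineMap
  have := hline.le_slope_of_hasDerivAt (x := 0) (y := 1) (by simpa [ℓ]) (by simpa [ℓ]) one_pos hd
  simp only [slope, ℓ, Function.comp_apply, AffineMap.lineMap_apply_one,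
    AffineMap.lineMap_apply_zero, vsub_eq_sub, sub_zero, inv_one, one_smul] at this
  linarith

theorem le_add_inner_add_of_lipschitz_gradient {f : E → ℝ} {f' : E → E} {L : ℝ}
    (hgrad : ∀ z, HasGradientAt f (f' z) z) (hLip : ∀ z w, ‖f' z - f' w‖ ≤ L * ‖z - w‖)
    (a b : E) :
    f b ≤ f a + ⟪f' a, b - a⟫ + L / 2 * ‖b - a‖ ^ 2 := by
  set ℓ : ℝ →ᵃ[ℝ] E := AffineMap.lineMap a b
  set φ : ℝ → ℝ := fun t => f (ℓ t) - t * ⟪f' a, b - a⟫ - L / 2 * t ^ 2 * ‖b - a‖ ^ 2 with hφ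
  have hderiv : ∀ t, HasDerivAt φ
      (⟪f' (ℓ t), b - a⟫ - ⟪f' a, b - a⟫ - L * t * ‖b - a‖ ^ 2) t := by
    intro t
    have hf := (hgrad (ℓ t)).hasFDerivAt.comp_hasDerivAt t AffineMap.hasDerivAt_lineMap
    have hq := ((hasDerivAt_pow 2 t).const_mul (L / 2)).mul_const (‖b - a‖ ^ 2)
    refine ((hf.sub ((hasDerivAt_id t).mul_const ⟪f' a, b - a⟫)).sub hq).congr_deriv ?_
    simp only [InnerProductSpace.toDual_apply_apply]
    ring
  have hanti : AntitoneOn φ (Set.Icc 0 1) := by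
    refine antitoneOn_of_hasDerivWithinAt_nonpos (convex_Icc 0 1)
      (fun t _ => (hderiv t).continuousAt.continuousWithinAt)
      (fun t _ => (hderiv t).hasDerivWithinAt) ?_
    intro t ht
    rw [interior_Icc] at ht
    have hnorm : ‖f' (ℓ t) - f' a‖ ≤ L * (t * ‖b - a‖) := by
      simpa [ℓ, AffineMap.lineMap_apply_module', norm_smul, abs_of_pos ht.1] using hLip (ℓ t) a
    have hcs := real_inner_le_norm (f' (ℓ t) - f' a) (b - a)
    rw [inner_sub_left] at hcs
    nlinarith [norm_nonneg (b - a)]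
  have h01 := hanti (by simp) (by simp) zero_le_one
  simp only [hφ, ℓ, AffineMap.lineMap_apply_one, AffineMap.lineMap_apply_zero] at h01
  linarith

end Convex

section Subgradient

variable {E : Type*} [NormedAddCommGroup E] [InnerProductSpace ℝ E]

def HasSubgradientOn (g : E → ℝ) (s : Set E) (y v : E) : Prop :=
  y ∈ s ∧ ∀ w ∈ s, g y + ⟪v, w - y⟫ ≤ g w

theorem HasSubgradientOn.inner_sub_nonneg {g : E → ℝ} {s : Set E} {y y' v v' : E}
    (h : HasSubgradientOn g s y v) (h' : HasSubgradientOn g s y' v') : 0 ≤ ⟪v' - v, y' - y⟫ := by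
  have h₁ := h.2 y' h'.1
  have h₂ := h'.2 y h.1
  have hswap : ⟪v', y - y'⟫ = -⟪v', y' - y⟫ := by rw [← inner_neg_right, neg_sub]
  rw [inner_sub_left]
  linarith

end Subgradient

section ProxGradStep

variable {E F : Type*} [NormedAddCommGroup E] [InnerProductSpace ℝ E]
  [NormedAddCommGroup F] [InnerProductSpace ℝ F]

theorem ConvexOn.prox_three_point {D : Set E} {ξ : E → ℝ} {c : ℝ} {xk xp z G : E}
    (hc : 0 < c) (hξ : ConvexOn ℝ D ξ) (hxp : xp ∈ D) (hz : z ∈ D)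
    (hmin : ∀ w ∈ D, ξ xp + (2 * c)⁻¹ * ‖xp - (xk - c • G)‖ ^ 2
      ≤ ξ w + (2 * c)⁻¹ * ‖w - (xk - c • G)‖ ^ 2) :
    ξ xp + ⟪G, xp - xk⟫ + (2 * c)⁻¹ * ‖xp - xk‖ ^ 2 + (2 * c)⁻¹ * ‖z - xp‖ ^ 2
      ≤ ξ z + ⟪G, z - xk⟫ + (2 * c)⁻¹ * ‖z - xk‖ ^ 2 := by
  set v := xk - c • G
  have hmin' := hξ.add_add_le_of_isMinOn (Q := fun w => (2 * c)⁻¹ * ‖w - v‖ ^ 2)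
    (S := (2 * c)⁻¹ * ‖z - xp‖ ^ 2) hxp hz (isMinOn_iff.2 hmin) fun t _ => by
      have hsplit : (1 - t) • xp + t • z - v = (1 - t) • (xp - v) + t • (z - v) := by module
      rw [hsplit, norm_one_sub_smul_add_smul_sq, sub_sub_sub_cancel_right, norm_sub_rev xp z]
      ring
  have hexpand : ∀ w, (2 * c)⁻¹ * ‖w - v‖ ^ 2
      = (2 * c)⁻¹ * ‖w - xk‖ ^ 2 + ⟪G, w - xk⟫ + c / 2 * ‖G‖ ^ 2 := by
    intro w
    rw [show w - v = (w - xk) + c • G by simp only [v]; abel, norm_add_sq_real,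
      real_inner_smul_right, norm_smul, Real.norm_eq_abs, abs_of_pos hc, real_inner_comm]
    field_simp
  simp only [hexpand] at hmin'
  linarith

variable [CompleteSpace E] [CompleteSpace F]

theorem prox_grad_step_le {A : E →L[ℝ] F} {D : Set E} {ξ f : E → ℝ} {f' : E → E}
    {L γ c : ℝ} {xk xp xs : E} {p : F} (hγ : 0 < γ) (hc : 0 < c)
    (hcL : c * (L + γ * ‖A‖ ^ 2) < 1) (hξ : ConvexOn ℝ D ξ) (hf : ConvexOn ℝ Set.univ f)
    (hgrad : ∀ z, HasGradientAt f (f' z) z) (hLip : ∀ z w, ‖f' z - f' w‖ ≤ L * ‖z - w‖)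
    (hxp : xp ∈ D) (hxs : xs ∈ D)
    (hmin : ∀ z ∈ D, ξ xp + (2 * c)⁻¹ * ‖xp - (xk - c • (f' xk + (A†) p))‖ ^ 2
      ≤ ξ z + (2 * c)⁻¹ * ‖z - (xk - c • (f' xk + (A†) p))‖ ^ 2) :
    ξ xp + f xp + ⟪p + γ • A (xp - xk), A (xp - xs)⟫
      ≤ ξ xs + f xs + (2 * c)⁻¹ * (‖xs - xk‖ ^ 2 - c * γ * ‖A (xs - xk)‖ ^ 2)
        - (2 * c)⁻¹ * (‖xs - xp‖ ^ 2 - c * γ * ‖A (xs - xp)‖ ^ 2) := by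
  have hprox := hξ.prox_three_point hc hxp hxs hmin
  have hadj : ∀ z, ⟪f' xk + (A†) p, z - xk⟫ = ⟪f' xk, z - xk⟫ + ⟪p, A (z - xk)⟫ := fun z => by
    rw [inner_add_left, ContinuousLinearMap.adjoint_inner_left]
  rw [hadj, hadj] at hprox
  have hdescent := le_add_inner_add_of_lipschitz_gradient hgrad hLip xk xp
  have hsupport := hf.add_inner_sub_le_of_hasGradientAt (Set.mem_univ xk) (Set.mem_univ xs)
    (hgrad xk)
  have hpolar : γ * ⟪A (xp - xk), A (xp - xs)⟫
      = γ / 2 * (‖A (xp - xk)‖ ^ 2 + ‖A (xs - xp)‖ ^ 2 - ‖A (xs - xk)‖ ^ 2) := by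
    have h := norm_sub_sq_real (A (xp - xk)) (A (xp - xs))
    rw [← map_sub, sub_sub_sub_cancel_left, ← norm_neg (A (xp - xs)), ← map_neg, neg_sub] at h
    linear_combination (γ / 2) * h
  have hsplit : ⟪p, A (xp - xs)⟫ = ⟪p, A (xp - xk)⟫ - ⟪p, A (xs - xk)⟫ := by
    rw [← inner_sub_right, ← map_sub, sub_sub_sub_cancel_right]
  have hcurv : γ / 2 * ‖A (xp - xk)‖ ^ 2 + L / 2 * ‖xp - xk‖ ^ 2
      ≤ (2 * c)⁻¹ * ‖xp - xk‖ ^ 2 := by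
    have hA : ‖A (xp - xk)‖ ^ 2 ≤ ‖A‖ ^ 2 * ‖xp - xk‖ ^ 2 := by
      rw [← mul_pow]
      exact pow_le_pow_left₀ (norm_nonneg _) (A.le_opNorm _) 2
    have h₁ := mul_le_mul_of_nonneg_left hA (mul_nonneg hc.le hγ.le)
    have h₂ := mul_le_mul_of_nonneg_right hcL.le (sq_nonneg ‖xp - xk‖)
    calc γ / 2 * ‖A (xp - xk)‖ ^ 2 + L / 2 * ‖xp - xk‖ ^ 2
        = (2 * c)⁻¹ * (c * γ * ‖A (xp - xk)‖ ^ 2 + c * L * ‖xp - xk‖ ^ 2) := by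
          field_simp
      _ ≤ (2 * c)⁻¹ * ‖xp - xk‖ ^ 2 := by gcongr; linarith
  have hκ : ∀ X : ℝ, (2 * c)⁻¹ * (c * γ * X) = γ / 2 * X := fun X => by field_simp
  rw [inner_add_left, real_inner_smul_left, hpolar, hsplit]
  simp only [mul_sub, hκ]
  linarith

end ProxGradStep

theorem inv_two_mul_norm_sub_sq_le {V : Type*} [SeminormedAddCommGroup V] {γ : ℝ} (hγ : 0 < γ)
    {l ls l₀ : V} (hl : ‖l‖ ≤ 2 * ‖ls‖) :
    (2 * γ)⁻¹ * ‖l - l₀‖ ^ 2 ≤ γ⁻¹ * (4 * ‖ls‖ ^ 2 + ‖l₀‖ ^ 2) := by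
  have h : ‖l - l₀‖ ≤ 2 * ‖ls‖ + ‖l₀‖ := (norm_sub_le _ _).trans (by linarith)
  have h' : ‖l - l₀‖ ^ 2 ≤ 2 * (4 * ‖ls‖ ^ 2 + ‖l₀‖ ^ 2) := by
    nlinarith [norm_nonneg (l - l₀), sq_nonneg (2 * ‖ls‖ - ‖l₀‖)]
  calc (2 * γ)⁻¹ * ‖l - l₀‖ ^ 2 ≤ (2 * γ)⁻¹ * (2 * (4 * ‖ls‖ ^ 2 + ‖l₀‖ ^ 2)) := by gcongr
    _ = γ⁻¹ * (4 * ‖ls‖ ^ 2 + ‖l₀‖ ^ 2) := by field_simp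

section BlockEnergy

variable {E F : Type*} [NormedAddCommGroup E] [NormedSpace ℝ E] [NormedAddCommGroup F]
  [NormedSpace ℝ F]

/-- `us` and `u` stand for `B y⋆` and `B y`. -/
noncomputable def blockEnergy (A : E →L[ℝ] F) (γ c : ℝ) (xs : E) (us lt : F) (x : E) (u l : F) :
    ℝ :=
  (2 * c)⁻¹ * (‖xs - x‖ ^ 2 - c * γ * ‖A (xs - x)‖ ^ 2) + γ / 2 * ‖us - u‖ ^ 2
    + (2 * γ)⁻¹ * ‖lt - l‖ ^ 2

theorem blockEnergy_nonneg {A : E →L[ℝ] F} {γ c : ℝ} (hγ : 0 < γ) (hc : 0 < c)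
    (hA : c * γ * ‖A‖ ^ 2 ≤ 1) (xs : E) (us lt : F) (x : E) (u l : F) :
    0 ≤ blockEnergy A γ c xs us lt x u l := by
  have hAx : c * γ * ‖A (xs - x)‖ ^ 2 ≤ ‖xs - x‖ ^ 2 :=
    calc c * γ * ‖A (xs - x)‖ ^ 2 ≤ c * γ * (‖A‖ * ‖xs - x‖) ^ 2 := by
          gcongr; exact A.le_opNorm _
      _ = c * γ * ‖A‖ ^ 2 * ‖xs - x‖ ^ 2 := by ring
      _ ≤ ‖xs - x‖ ^ 2 := mul_le_of_le_one_left (sq_nonneg _) hA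
  unfold blockEnergy
  have : 0 ≤ (2 * c)⁻¹ * (‖xs - x‖ ^ 2 - c * γ * ‖A (xs - x)‖ ^ 2) :=
    mul_nonneg (by positivity) (sub_nonneg.2 hAx)
  positivity

end BlockEnergy

section BlockDescent

variable {E F : Type*} [NormedAddCommGroup E] [InnerProductSpace ℝ E] [CompleteSpace E]
  [NormedAddCommGroup F] [InnerProductSpace ℝ F] [CompleteSpace F]

/-- After summing over the blocks, the last two terms on the left are absorbed by the
subgradient inequality of the `y`-step at `y⋆` and by the monotonicity of `∂g`. -/
theorem blockEnergy_descent {A : E →L[ℝ] F} {b : F} {D : Set E} {ξ f : E → ℝ} {f' : E → E}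
    {L γ c : ℝ} {xk xp xs : E} {uk up us lk lp : F} (lt : F) (hγ : 0 < γ) (hc : 0 < c)
    (hcL : c * (L + γ * ‖A‖ ^ 2) < 1) (hξ : ConvexOn ℝ D ξ) (hf : ConvexOn ℝ Set.univ f)
    (hgrad : ∀ z, HasGradientAt f (f' z) z) (hLip : ∀ z w, ‖f' z - f' w‖ ≤ L * ‖z - w‖)
    (hxp : xp ∈ D) (hxs : xs ∈ D)
    (hmin : ∀ z ∈ D,
      ξ xp + (2 * c)⁻¹ * ‖xp - (xk - c • (f' xk + (A†) (lk + γ • (A xk + uk - b))))‖ ^ 2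
        ≤ ξ z + (2 * c)⁻¹ * ‖z - (xk - c • (f' xk + (A†) (lk + γ • (A xk + uk - b))))‖ ^ 2)
    (hdual : lp = lk + γ • (A xp + up - b)) (hfeas : A xs + us - b = 0) :
    ξ xp + f xp - (ξ xs + f xs) + ⟪lt, A xp + up - b⟫ + γ * ⟪uk - up, A xp + up - b⟫
        + ⟪lp, us - up⟫
      ≤ blockEnergy A γ c xs us lt xk uk lk - blockEnergy A γ c xs us lt xp up lp := by
  set r := A xp + up - b
  have hstep := prox_grad_step_le hγ hc hcL hξ hf hgrad hLip hxp hxs hmin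
  have hp : lk + γ • (A xk + uk - b) + γ • A (xp - xk) = lp + γ • (uk - up) := by
    rw [hdual, map_sub]; module
  have hAx : A (xp - xs) = r + (us - up) := by
    rw [map_sub, show A xs = b - us from by rw [← sub_eq_zero, ← hfeas]; abel]
    simp only [r]
    abel
  rw [hp, hAx, inner_add_left, inner_add_right, inner_add_right, real_inner_smul_left,
    real_inner_smul_left] at hstep
  have hlr : lp - lk = γ • r := by rw [hdual]; abel
  have hdualgap : ⟪lt, r⟫ - ⟪lp, r⟫
      = (2 * γ)⁻¹ * (‖lt - lk‖ ^ 2 - ‖lt - lp‖ ^ 2 - ‖lp - lk‖ ^ 2) := by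
    have h := norm_add_sq_real (lt - lp) (lp - lk)
    have hinner : ⟪lt - lp, lp - lk⟫ = γ * (⟪lt, r⟫ - ⟪lp, r⟫) := by
      rw [hlr, real_inner_smul_right, inner_sub_left]
    rw [sub_add_sub_cancel] at h
    field_simp
    linear_combination -h - 2 * hinner
  have hpolar : γ * ⟪uk - up, us - up⟫
      = γ / 2 * (‖uk - up‖ ^ 2 + ‖us - up‖ ^ 2 - ‖us - uk‖ ^ 2) := by
    have h := norm_sub_sq_real (uk - up) (us - up)
    rw [sub_sub_sub_cancel_right, norm_sub_rev uk us] at h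
    linear_combination (γ / 2) * h
  have h₁ : 0 ≤ (2 * γ)⁻¹ * ‖lp - lk‖ ^ 2 := by positivity
  have h₂ : 0 ≤ γ / 2 * ‖uk - up‖ ^ 2 := by positivity
  unfold blockEnergy
  linarith

end BlockDescent

theorem eq_zero_of_forall_sum_inner_le {ι : Type*} [Fintype ι] {F : ι → Type*}
    [∀ i, NormedAddCommGroup (F i)] [∀ i, InnerProductSpace ℝ (F i)] {r ls : ∀ i, F i}
    (h : ∀ l : ∀ i, F i, ∑ i, ⟪l i, r i⟫ ≤ ∑ i, ⟪ls i, r i⟫) (i : ι) : r i = 0 := by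
  have hsq : ∑ j, ‖r j‖ ^ 2 ≤ 0 := by
    simpa [inner_add_left, sum_add_distrib, real_inner_self_eq_norm_sq] using h (ls + r)
  have hzero := (sum_eq_zero_iff_of_nonneg fun j _ => sq_nonneg ‖r j‖).1
    (le_antisymm hsq (by positivity)) i (mem_univ i)
  simpa using hzero

theorem sum_Icc_one_eq_sum_range {M : Type*} [AddCommMonoid M] (h : ℕ → M) (t : ℕ) :
    ∑ k ∈ Icc 1 t, h k = ∑ k ∈ range t, h (k + 1) := by
  induction t with
  | zero => simp
  | succ t ih => rw [sum_Icc_succ_top (by omega), ih, sum_range_succ]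

theorem Convex.inv_natCast_smul_sum_Icc_mem {V : Type*} [AddCommGroup V] [Module ℝ V] {s : Set V}
    (hs : Convex ℝ s) {x : ℕ → V} (hx : ∀ k, x (k + 1) ∈ s) {t : ℕ} (ht : 0 < t) :
    (t : ℝ)⁻¹ • ∑ k ∈ Icc 1 t, x k ∈ s := by
  rw [smul_sum]
  refine hs.sum_mem (fun _ _ => by positivity) (by simp only [sum_const, Nat.card_Icc, add_tsub_cancel_right, nsmul_eq_mul]; field_simp) fun k hk => ?_
  obtain ⟨j, rfl⟩ : ∃ j, k = j + 1 := ⟨k - 1, by grind⟩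
  exact hx j

theorem exists_norm_le_real_inner_eq {V : Type*} [NormedAddCommGroup V] [InnerProductSpace ℝ V]
    {a : ℝ} (ha : 0 ≤ a) (r : V) : ∃ l : V, ‖l‖ ≤ a ∧ ⟪l, r⟫ = a * ‖r‖ := by
  rcases eq_or_ne r 0 with rfl | hr
  · exact ⟨0, by simpa using ha, by simp⟩
  · have hr' : ‖r‖ ≠ 0 := norm_ne_zero_iff.2 hr
    refine ⟨(a / ‖r‖) • r, ?_, ?_⟩
    · rw [norm_smul, Real.norm_of_nonneg (by positivity), div_mul_cancel₀ _ hr']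
    · rw [real_inner_smul_left, real_inner_self_eq_norm_sq]
      field_simp

theorem abs_le_and_sum_norm_mul_le {ι : Type*} [Fintype ι] {F : ι → Type*}
    [∀ i, NormedAddCommGroup (F i)] [∀ i, InnerProductSpace ℝ (F i)] {D C t : ℝ}
    {r ls : ∀ i, F i} {V : (∀ i, F i) → ℝ} (ht : 0 < t)
    (hgap : ∀ l : ∀ i, F i, D + ∑ i, ⟪l i, r i⟫ ≤ V l / t) (hsaddle : -∑ i, ⟪ls i, r i⟫ ≤ D)
    (hV : ∀ l : ∀ i, F i, (∀ i, ‖l i‖ ≤ 2 * ‖ls i‖) → V l ≤ C) :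
    |D| ≤ C / t ∧ ∑ i, ‖ls i‖ * ‖r i‖ ≤ C / t := by
  have hC : ∀ l : ∀ i, F i, (∀ i, ‖l i‖ ≤ 2 * ‖ls i‖) → D + ∑ i, ⟪l i, r i⟫ ≤ C / t := fun l hl =>
    (hgap l).trans (div_le_div_of_nonneg_right (hV l hl) ht.le)
  choose l hl hlr using fun i => exists_norm_le_real_inner_eq (by positivity : 0 ≤ 2 * ‖ls i‖) (r i)
  have hupper := hC 0 fun i => by simp
  have hinfeas := hC l hl
  simp only [hlr, mul_assoc, ← mul_sum] at hinfeas
  simp only [Pi.zero_apply, inner_zero_left, sum_const_zero, add_zero] at hupper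
  have hcs : ∑ i, ⟪ls i, r i⟫ ≤ ∑ i, ‖ls i‖ * ‖r i‖ := sum_le_sum fun i _ => real_inner_le_norm _ _
  have hnn : 0 ≤ ∑ i, ‖ls i‖ * ‖r i‖ := by positivity
  exact ⟨abs_le.2 ⟨by linarith, hupper⟩, by linarith⟩

theorem mul_lt_one_of_lt_inv {c a : ℝ} (hc : 0 < c) (h : c < a⁻¹) : c * a < 1 := by
  have ha : 0 < a := inv_pos.1 (hc.trans h)
  calc c * a < a⁻¹ * a := mul_lt_mul_of_pos_right h ha
    _ = 1 := inv_mul_cancel₀ ha.ne'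

theorem mul_mul_opNorm_sq_le_one {E F : Type*} [NormedAddCommGroup E] [NormedSpace ℝ E]
    [NormedAddCommGroup F] [NormedSpace ℝ F] {A : E →L[ℝ] F} {f' : E → E} {L γ c : ℝ}
    (hc : 0 < c) (hcL : c * (L + γ * ‖A‖ ^ 2) < 1) (hLip : ∀ z w, ‖f' z - f' w‖ ≤ L * ‖z - w‖) :
    c * γ * ‖A‖ ^ 2 ≤ 1 := by
  rcases subsingleton_or_nontrivial E with hE | hE
  · simp [A.opNorm_subsingleton]
  · obtain ⟨z, hz⟩ := exists_ne (0 : E)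
    have hL : 0 ≤ L := by
      by_contra hneg
      have hzL := hLip z 0
      rw [sub_zero] at hzL
      linarith [mul_neg_of_neg_of_pos (not_le.1 hneg) (norm_pos_iff.2 hz),
        norm_nonneg (f' z - f' 0)]
    nlinarith [mul_nonneg hc.le hL]

section PGADMM

variable {ι : Type*} [Fintype ι] {E F : ι → Type*} {G : Type*}
  [∀ i, NormedAddCommGroup (E i)] [∀ i, InnerProductSpace ℝ (E i)]
  [∀ i, NormedAddCommGroup (F i)] [∀ i, InnerProductSpace ℝ (F i)]
  [NormedAddCommGroup G] [InnerProductSpace ℝ G]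
  (A : ∀ i, E i →L[ℝ] F i) (B : ∀ i, G →L[ℝ] F i) (b : ∀ i, F i)
  (g : G → ℝ) (ξ f : ∀ i, E i → ℝ)

noncomputable def objective (x : ∀ i, E i) (y : G) : ℝ :=
  g y + ∑ i, (ξ i (x i) + f i (x i))

noncomputable def lagrangian (x : ∀ i, E i) (y : G) (l : ∀ i, F i) : ℝ :=
  objective g ξ f x y + ∑ i, ⟪l i, A i (x i) + B i y - b i⟫

noncomputable def lyapunov (γ c : ι → ℝ) (xs : ∀ i, E i) (ys : G) (lt : ∀ i, F i)
    (x : ∀ i, E i) (y : G) (l : ∀ i, F i) : ℝ :=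
  ∑ i, blockEnergy (A i) (γ i) (c i) (xs i) (B i ys) (lt i) (x i) (B i y) (l i)

variable {A B b g ξ f}

theorem lagrangian_le_sum_smul {κ : Type*} {D : ∀ i, Set (E i)} {domg : Set G}
    (hξ : ∀ i, ConvexOn ℝ (D i) (ξ i)) (hf : ∀ i, ConvexOn ℝ Set.univ (f i))
    (hg : ConvexOn ℝ domg g) {S : Finset κ} {w : κ → ℝ} (hw₀ : ∀ k ∈ S, 0 ≤ w k)
    (hw₁ : ∑ k ∈ S, w k = 1) {x : κ → ∀ i, E i} {y : κ → G} (hx : ∀ k ∈ S, ∀ i, x k i ∈ D i)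
    (hy : ∀ k ∈ S, y k ∈ domg) (l : ∀ i, F i) :
    lagrangian A B b g ξ f (fun i => ∑ k ∈ S, w k • x k i) (∑ k ∈ S, w k • y k) l
      ≤ ∑ k ∈ S, w k * lagrangian A B b g ξ f (x k) (y k) l := by
  have hres : ∀ i, A i (∑ k ∈ S, w k • x k i) + B i (∑ k ∈ S, w k • y k) - b i
      = ∑ k ∈ S, w k • (A i (x k i) + B i (y k) - b i) := fun i => by
    simp only [map_sum, map_smul, smul_sub, smul_add, sum_sub_distrib, sum_add_distrib,
      ← sum_smul, hw₁, one_smul]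
  calc lagrangian A B b g ξ f (fun i => ∑ k ∈ S, w k • x k i) (∑ k ∈ S, w k • y k) l
      ≤ ∑ k ∈ S, w k * g (y k) + ∑ i, ∑ k ∈ S, w k * (ξ i (x k i) + f i (x k i))
        + ∑ i, ∑ k ∈ S, w k * ⟪l i, A i (x k i) + B i (y k) - b i⟫ := by
        unfold lagrangian objective
        simp only [hres, inner_sum, real_inner_smul_right]
        gcongr with i
        · exact hg.map_sum_le hw₀ hw₁ hy
        · exact ((hξ i).add ((hf i).subset (Set.subset_univ _) (hξ i).1)).map_sum_le hw₀ hw₁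
            fun k hk => hx k hk i
    _ = ∑ k ∈ S, w k * lagrangian A B b g ξ f (x k) (y k) l := by
        simp only [lagrangian, objective, mul_add, sum_add_distrib, mul_sum]
        rw [sum_comm (s := univ), sum_comm (s := univ), sum_comm (s := univ)]

theorem lagrangian_ergodic_sub_le {D : ∀ i, Set (E i)} {domg : Set G}
    (hξ : ∀ i, ConvexOn ℝ (D i) (ξ i)) (hf : ∀ i, ConvexOn ℝ Set.univ (f i))
    (hg : ConvexOn ℝ domg g) {x : ℕ → ∀ i, E i} {y : ℕ → G}
    (hx : ∀ k i, x (k + 1) i ∈ D i) (hy : ∀ k, y (k + 1) ∈ domg) (l : ∀ i, F i)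
    {Fs : ℝ} {V : ℕ → ℝ}
    (hstep : ∀ k, lagrangian A B b g ξ f (x (k + 1)) (y (k + 1)) l - Fs ≤ V k - V (k + 1))
    (hV : ∀ k, 0 ≤ V k) {t : ℕ} (ht : 0 < t) :
    lagrangian A B b g ξ f (fun i => (t : ℝ)⁻¹ • ∑ k ∈ Icc 1 t, x k i)
        ((t : ℝ)⁻¹ • ∑ k ∈ Icc 1 t, y k) l - Fs
      ≤ V 0 / t := by
  have htR : (0 : ℝ) < t := by exact_mod_cast ht
  have hmem : ∀ k ∈ Icc 1 t, ∃ j, k = j + 1 := fun k hk => ⟨k - 1, by grind⟩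
  have hjensen := lagrangian_le_sum_smul (A := A) (B := B) (b := b) hξ hf hg (S := Icc 1 t)
    (w := fun _ => (t : ℝ)⁻¹) (fun _ _ => by positivity) (by simp only [sum_const, Nat.card_Icc, add_tsub_cancel_right, nsmul_eq_mul]; field_simp)
    (fun k hk i => by obtain ⟨j, rfl⟩ := hmem k hk; exact hx j i)
    (fun k hk => by obtain ⟨j, rfl⟩ := hmem k hk; exact hy j) l
  simp only [← smul_sum, ← mul_sum] at hjensen
  have htelescope : ∑ k ∈ Icc 1 t, (lagrangian A B b g ξ f (x k) (y k) l - Fs) ≤ V 0 :=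
    calc ∑ k ∈ Icc 1 t, (lagrangian A B b g ξ f (x k) (y k) l - Fs)
        ≤ ∑ k ∈ range t, (V k - V (k + 1)) := by
          rw [sum_Icc_one_eq_sum_range]; exact sum_le_sum fun k _ => hstep k
      _ = V 0 - V t := sum_range_sub' V t
      _ ≤ V 0 := by linarith [hV t]
  rw [sum_sub_distrib, sum_const, Nat.card_Icc, Nat.add_sub_cancel, nsmul_eq_mul] at htelescope
  calc _ ≤ (t : ℝ)⁻¹ * ∑ k ∈ Icc 1 t, lagrangian A B b g ξ f (x k) (y k) l - Fs := by
        linarith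
    _ = (t : ℝ)⁻¹ * (∑ k ∈ Icc 1 t, lagrangian A B b g ξ f (x k) (y k) l - t * Fs) := by
        field_simp
    _ ≤ V 0 / t := by rw [div_eq_inv_mul]; gcongr

theorem lyapunov_nonneg {γ c : ι → ℝ} (hγ : ∀ i, 0 < γ i) (hc : ∀ i, 0 < c i)
    (hA : ∀ i, c i * γ i * ‖A i‖ ^ 2 ≤ 1) (xs : ∀ i, E i) (ys : G) (lt : ∀ i, F i)
    (x : ∀ i, E i) (y : G) (l : ∀ i, F i) :
    0 ≤ lyapunov A B γ c xs ys lt x y l :=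
  sum_nonneg fun i _ => blockEnergy_nonneg (hγ i) (hc i) (hA i) _ _ _ _ _ _

theorem lyapunov_le {γ c : ι → ℝ} (hγ : ∀ i, 0 < γ i) {lt ls : ∀ i, F i}
    (hl : ∀ i, ‖lt i‖ ≤ 2 * ‖ls i‖) (xs : ∀ i, E i) (ys : G) (x : ∀ i, E i) (y : G)
    (l : ∀ i, F i) :
    lyapunov A B γ c xs ys lt x y l
      ≤ ∑ i, ((γ i)⁻¹ * (4 * ‖ls i‖ ^ 2 + ‖l i‖ ^ 2)
          + (2 * c i)⁻¹ * (‖xs i - x i‖ ^ 2 - c i * γ i * ‖A i (xs i - x i)‖ ^ 2))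
        + 1 / 2 * ∑ i, γ i * ‖B i (ys - y)‖ ^ 2 := by
  rw [mul_sum, ← sum_add_distrib]
  refine sum_le_sum fun i _ => ?_
  have := inv_two_mul_norm_sub_sq_le (l₀ := l i) (hγ i) (hl i)
  rw [blockEnergy, map_sub (B i) ys y]
  linarith

variable [∀ i, CompleteSpace (F i)] [CompleteSpace G]

theorem inner_neg_sum_adjoint (l : ∀ i, F i) (w : G) :
    ⟪-(∑ i, ((B i)†) (l i)), w⟫ = -∑ i, ⟪l i, B i w⟫ := by
  simp only [inner_neg_left, sum_inner, ContinuousLinearMap.adjoint_inner_left]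

theorem hasSubgradientOn_of_augmented_min {domg : Set G} (hg : ConvexOn ℝ domg g)
    {γ : ι → ℝ} (hγ : ∀ i, 0 < γ i) {a : ∀ i, F i} {yp : G} {lk lp : ∀ i, F i}
    (hyp : yp ∈ domg)
    (hmin : ∀ z ∈ domg,
      g yp + ∑ i, γ i / 2 * ‖a i + B i yp - b i + (γ i)⁻¹ • lk i‖ ^ 2
        ≤ g z + ∑ i, γ i / 2 * ‖a i + B i z - b i + (γ i)⁻¹ • lk i‖ ^ 2)
    (hdual : ∀ i, lp i = lk i + γ i • (a i + B i yp - b i)) :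
    HasSubgradientOn g domg yp (-(∑ i, ((B i)†) (lp i))) := by
  set T : ∀ i, G → F i := fun i z => a i + B i z - b i + (γ i)⁻¹ • lk i
  have hT : ∀ i z, T i z = T i yp + B i (z - yp) := fun i z => by
    simp only [T, map_sub]; abel
  have hlp : ∀ i, lp i = γ i • T i yp := fun i => by
    simp only [T, hdual i, smul_add, smul_smul, mul_inv_cancel₀ (hγ i).ne', one_smul]; abel
  refine ⟨hyp, fun z hz => ?_⟩
  have hthree := hg.add_add_le_of_isMinOn (Q := fun z => ∑ i, γ i / 2 * ‖T i z‖ ^ 2)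
    (S := ∑ i, γ i / 2 * ‖B i (z - yp)‖ ^ 2) hyp hz (isMinOn_iff.2 hmin) fun t _ => by
      simp only [mul_sum, ← sum_add_distrib, ← sum_sub_distrib]
      refine sum_congr rfl fun i _ => ?_
      have hcomb : T i ((1 - t) • yp + t • z) = (1 - t) • T i yp + t • T i z := by
        simp only [T, map_add, map_smul]; module
      rw [hcomb, norm_one_sub_smul_add_smul_sq, hT i z, sub_add_cancel_left, norm_neg]
      ring
  have hexpand : ∀ i, γ i / 2 * ‖T i z‖ ^ 2
      = γ i / 2 * ‖T i yp‖ ^ 2 + ⟪lp i, B i (z - yp)⟫ + γ i / 2 * ‖B i (z - yp)‖ ^ 2 := by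
    intro i
    rw [hT i z, norm_add_sq_real, hlp i, real_inner_smul_left]
    ring
  simp only [hexpand, sum_add_distrib] at hthree
  rw [inner_neg_sum_adjoint]
  linarith

theorem HasSubgradientOn.sum_mul_inner_residual_nonneg {s : Set G} {yk yp : G}
    {lk lp r : ∀ i, F i} {γ : ι → ℝ}
    (hk : HasSubgradientOn g s yk (-(∑ i, ((B i)†) (lk i))))
    (hp : HasSubgradientOn g s yp (-(∑ i, ((B i)†) (lp i))))
    (hdual : ∀ i, lp i = lk i + γ i • r i) :
    0 ≤ ∑ i, γ i * ⟪B i yk - B i yp, r i⟫ := by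
  have h := hk.inner_sub_nonneg hp
  rw [inner_sub_left, inner_neg_sum_adjoint, inner_neg_sum_adjoint, neg_sub_neg,
    ← sum_sub_distrib] at h
  convert h using 2 with i
  rw [hdual i, inner_add_left, real_inner_smul_left, map_sub, ← neg_sub (B i yp),
    inner_neg_left, real_inner_comm]
  ring

variable [∀ i, CompleteSpace (E i)]

theorem lagrangian_sub_objective_le_lyapunov_sub {D : ∀ i, Set (E i)} {domg : Set G}
    {f' : ∀ i, E i → E i} {L γ c : ι → ℝ} (hγ : ∀ i, 0 < γ i) (hc : ∀ i, 0 < c i)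
    (hcL : ∀ i, c i * (L i + γ i * ‖A i‖ ^ 2) < 1) (hξ : ∀ i, ConvexOn ℝ (D i) (ξ i))
    (hf : ∀ i, ConvexOn ℝ Set.univ (f i)) (hgrad : ∀ i z, HasGradientAt (f i) (f' i z) z)
    (hLip : ∀ i z w, ‖f' i z - f' i w‖ ≤ L i * ‖z - w‖)
    {xk xp xs : ∀ i, E i} {yk yp ys : G} {lk lp : ∀ i, F i}
    (hxp : ∀ i, xp i ∈ D i) (hxs : ∀ i, xs i ∈ D i) (hys : ys ∈ domg)
    (hxmin : ∀ i, ∀ z ∈ D i,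
      ξ i (xp i) + (2 * c i)⁻¹ * ‖xp i - (xk i - c i • (f' i (xk i)
          + ((A i)†) (lk i + γ i • (A i (xk i) + B i yk - b i))))‖ ^ 2
        ≤ ξ i z + (2 * c i)⁻¹ * ‖z - (xk i - c i • (f' i (xk i)
          + ((A i)†) (lk i + γ i • (A i (xk i) + B i yk - b i))))‖ ^ 2)
    (hsubk : HasSubgradientOn g domg yk (-(∑ i, ((B i)†) (lk i))))
    (hsubp : HasSubgradientOn g domg yp (-(∑ i, ((B i)†) (lp i))))
    (hdual : ∀ i, lp i = lk i + γ i • (A i (xp i) + B i yp - b i))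
    (hfeas : ∀ i, A i (xs i) + B i ys - b i = 0) (lt : ∀ i, F i) :
    lagrangian A B b g ξ f xp yp lt - objective g ξ f xs ys
      ≤ lyapunov A B γ c xs ys lt xk yk lk - lyapunov A B γ c xs ys lt xp yp lp := by
  have hblock := sum_le_sum fun i (_ : i ∈ univ) => blockEnergy_descent (lt i) (hγ i) (hc i)
    (hcL i) (hξ i) (hf i) (hgrad i) (hLip i) (hxp i) (hxs i) (hxmin i) (hdual i) (hfeas i)
  have hg := hsubp.2 ys hys
  rw [inner_neg_sum_adjoint] at hg
  simp only [map_sub] at hg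
  have hmono := hsubk.sum_mul_inner_residual_nonneg hsubp hdual
  unfold lagrangian objective lyapunov
  simp only [sum_add_distrib, sum_sub_distrib] at hblock ⊢
  linarith

end PGADMM

section Matrix

variable {m n : Type*} [Fintype m] [Fintype n]

theorem mvec_mul {p : Type*} [Fintype p] (M : Matrix m n ℝ) (N : Matrix n p ℝ)
    (v : EuclideanSpace ℝ p) : mvec (M * N) v = mvec M (mvec N v) := by
  simp [mvec, mulVec_mulVec]

variable [DecidableEq n]

noncomputable def Matrix.toEuclideanOp (M : Matrix m n ℝ) :
    EuclideanSpace ℝ n →L[ℝ] EuclideanSpace ℝ m :=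
  LinearMap.toContinuousLinearMap (Matrix.toEuclideanLin M)

theorem mvec_eq_toEuclideanOp (M : Matrix m n ℝ) (v : EuclideanSpace ℝ n) :
    mvec M v = M.toEuclideanOp v := rfl

theorem spec_eq_norm_toEuclideanOp (M : Matrix m n ℝ) : spec M = ‖M.toEuclideanOp‖ := rfl

theorem qnorm_sub (Q Q' : Matrix n n ℝ) (v : EuclideanSpace ℝ n) :
    qnorm (Q - Q') v = qnorm Q v - qnorm Q' v := by
  simp only [qnorm, mvec_eq_toEuclideanOp, Matrix.toEuclideanOp, map_sub,
    _root_.sub_apply, inner_sub_right]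

theorem qnorm_smul (r : ℝ) (Q : Matrix n n ℝ) (v : EuclideanSpace ℝ n) :
    qnorm (r • Q) v = r * qnorm Q v := by
  simp only [qnorm, mvec_eq_toEuclideanOp, Matrix.toEuclideanOp, map_smul,
    _root_.smul_apply, real_inner_smul_right]

theorem qnorm_sum {κ : Type*} (s : Finset κ) (Q : κ → Matrix n n ℝ) (v : EuclideanSpace ℝ n) :
    qnorm (∑ k ∈ s, Q k) v = ∑ k ∈ s, qnorm (Q k) v := by
  simp only [qnorm, mvec_eq_toEuclideanOp, Matrix.toEuclideanOp, map_sum,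
    _root_.sum_apply, inner_sum]

theorem qnorm_one (v : EuclideanSpace ℝ n) : qnorm 1 v = ‖v‖ ^ 2 := by
  simp [qnorm, mvec]

variable [DecidableEq m]

theorem mvec_transpose (M : Matrix m n ℝ) (w : EuclideanSpace ℝ m) :
    mvec Mᵀ w = (M.toEuclideanOp†) w := by
  have hadj : Mᵀ.toEuclideanOp = M.toEuclideanOp† := by
    refine (ContinuousLinearMap.eq_adjoint_iff _ _).2 fun w v => ?_
    have h := Matrix.toEuclideanLin_conjTranspose_eq_adjoint M
    rw [conjTranspose_eq_transpose_of_trivial] at h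
    change ⟪toEuclideanLin Mᵀ w, v⟫ = ⟪w, toEuclideanLin M v⟫
    rw [h, LinearMap.adjoint_inner_left]
  rw [mvec_eq_toEuclideanOp, hadj]

theorem qnorm_transpose_mul_self (M : Matrix m n ℝ) (v : EuclideanSpace ℝ n) :
    qnorm (Mᵀ * M) v = ‖M.toEuclideanOp v‖ ^ 2 := by
  rw [qnorm, mvec_mul, mvec_transpose, ContinuousLinearMap.adjoint_inner_right,
    mvec_eq_toEuclideanOp, real_inner_self_eq_norm_sq]

end Matrix

/-- The extended-real-valued functions `ξ_i` and `g` are modelled as real-valued functions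
on their effective domains `domξ i` and `domg`. -/
theorem pg_admm_rate_general
    {N : ℕ} {n m : Fin N → ℕ} {ny : ℕ}
    (A : ∀ i, Matrix (Fin (m i)) (Fin (n i)) ℝ)
    (B : ∀ i, Matrix (Fin (m i)) (Fin ny) ℝ)
    (b : ∀ i, EuclideanSpace ℝ (Fin (m i)))
    (ξ : ∀ i, EuclideanSpace ℝ (Fin (n i)) → ℝ)
    (domξ : ∀ i, Set (EuclideanSpace ℝ (Fin (n i))))
    (f : ∀ i, EuclideanSpace ℝ (Fin (n i)) → ℝ)
    (f' : ∀ i, EuclideanSpace ℝ (Fin (n i)) → EuclideanSpace ℝ (Fin (n i)))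
    (L : Fin N → ℝ)
    (g : EuclideanSpace ℝ (Fin ny) → ℝ)
    (domg : Set (EuclideanSpace ℝ (Fin ny)))
    (γ : Fin N → ℝ) (c : Fin N → ℝ)
    (x : ℕ → ∀ i, EuclideanSpace ℝ (Fin (n i)))
    (y : ℕ → EuclideanSpace ℝ (Fin ny))
    (lam : ℕ → ∀ i, EuclideanSpace ℝ (Fin (m i)))
    (xbar : ℕ → ∀ i, EuclideanSpace ℝ (Fin (n i)))
    (ybar : ℕ → EuclideanSpace ℝ (Fin ny))
    -- ξ_i proper closed convex
    (hξconv : ∀ i, ConvexOn ℝ (domξ i) (ξ i))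
    -- f_i convex with L_i-Lipschitz gradient
    (hfconv : ∀ i, ConvexOn ℝ Set.univ (f i))
    (hfgrad : ∀ i z, HasGradientAt (f i) (f' i z) z)
    (hfLip : ∀ i z w, ‖f' i z - f' i w‖ ≤ L i * ‖z - w‖)
    -- g proper closed convex
    (hgconv : ConvexOn ℝ domg g)
    -- parameters
    (hγ : ∀ i, 0 < γ i)
    (hcpos : ∀ i, 0 < c i)
    (hcle : ∀ i, c i < (L i + γ i * spec (A i) ^ 2)⁻¹)
    -- initial condition: −Σ Bᵢᵀ λᵢ⁰ ∈ ∂g(y⁰)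
    (hinit : y 0 ∈ domg ∧ ∀ z ∈ domg,
      g (y 0) + ⟪-(∑ i, mvec (B i)ᵀ (lam 0 i)), z - y 0⟫ ≤ g z)
    -- PG-ADMM x-update (proximal gradient step, δ_i^k = 0)
    (hxup : ∀ k i, x (k+1) i ∈ domξ i ∧ ∀ z ∈ domξ i,
      ξ i (x (k+1) i) + (2 * c i)⁻¹ *
        ‖x (k+1) i - (x k i - c i • (f' i (x k i) +
          mvec (A i)ᵀ (lam k i + γ i • (mvec (A i) (x k i) + mvec (B i) (y k) - b i))))‖ ^ 2
      ≤ ξ i z + (2 * c i)⁻¹ *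
        ‖z - (x k i - c i • (f' i (x k i) +
          mvec (A i)ᵀ (lam k i + γ i • (mvec (A i) (x k i) + mvec (B i) (y k) - b i))))‖ ^ 2)
    -- PG-ADMM y-update
    (hyup : ∀ k, y (k+1) ∈ domg ∧ ∀ z ∈ domg,
      g (y (k+1)) + ∑ i, γ i / 2 *
        ‖mvec (A i) (x (k+1) i) + mvec (B i) (y (k+1)) - b i + (γ i)⁻¹ • lam k i‖ ^ 2
      ≤ g z + ∑ i, γ i / 2 *
        ‖mvec (A i) (x (k+1) i) + mvec (B i) z - b i + (γ i)⁻¹ • lam k i‖ ^ 2)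
    -- PG-ADMM dual update
    (hlamup : ∀ k i, lam (k+1) i
      = lam k i + γ i • (mvec (A i) (x (k+1) i) + mvec (B i) (y (k+1)) - b i))
    -- ergodic averages
    (hxbar : ∀ t i, xbar t i = (t : ℝ)⁻¹ • ∑ k ∈ Finset.Icc 1 t, x k i)
    (hybar : ∀ t, ybar t = (t : ℝ)⁻¹ • ∑ k ∈ Finset.Icc 1 t, y k)
    -- (x*, y*, λ*) ∈ χ*, a saddle point of the Lagrangian
    (xs : ∀ i, EuclideanSpace ℝ (Fin (n i)))
    (ys : EuclideanSpace ℝ (Fin ny))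
    (ls : ∀ i, EuclideanSpace ℝ (Fin (m i)))
    (hsad₁ : ∀ i, xs i ∈ domξ i) (hsad₂ : ys ∈ domg)
    (hsad₃ : ∀ (x' : ∀ i, EuclideanSpace ℝ (Fin (n i))) (y' : EuclideanSpace ℝ (Fin ny)),
      (∀ i, x' i ∈ domξ i) → y' ∈ domg →
      g ys + ∑ i, (ξ i (xs i) + f i (xs i))
        + ∑ i, ⟪ls i, mvec (A i) (xs i) + mvec (B i) ys - b i⟫
      ≤ g y' + ∑ i, (ξ i (x' i) + f i (x' i))
        + ∑ i, ⟪ls i, mvec (A i) (x' i) + mvec (B i) y' - b i⟫)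
    (hsad₄ : ∀ l : ∀ i, EuclideanSpace ℝ (Fin (m i)),
      g ys + ∑ i, (ξ i (xs i) + f i (xs i))
        + ∑ i, ⟪l i, mvec (A i) (xs i) + mvec (B i) ys - b i⟫
      ≤ g ys + ∑ i, (ξ i (xs i) + f i (xs i))
        + ∑ i, ⟪ls i, mvec (A i) (xs i) + mvec (B i) ys - b i⟫) :
    ∀ t : ℕ, 1 ≤ t →
      |(g (ybar t) + ∑ i, (ξ i (xbar t i) + f i (xbar t i)))
          - (g ys + ∑ i, (ξ i (xs i) + f i (xs i)))|
        ≤ (∑ i, ((γ i)⁻¹ * (4 * ‖ls i‖ ^ 2 + ‖lam 0 i‖ ^ 2)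
              + (2 * c i)⁻¹ * qnorm (1 - (c i * γ i) • ((A i)ᵀ * A i)) (xs i - x 0 i))
            + (1/2 : ℝ) * qnorm (∑ i, γ i • ((B i)ᵀ * B i)) (ys - y 0)) / t
      ∧ ∑ i, ‖ls i‖ * ‖mvec (A i) (xbar t i) + mvec (B i) (ybar t) - b i‖
        ≤ (∑ i, ((γ i)⁻¹ * (4 * ‖ls i‖ ^ 2 + ‖lam 0 i‖ ^ 2)
              + (2 * c i)⁻¹ * qnorm (1 - (c i * γ i) • ((A i)ᵀ * A i)) (xs i - x 0 i))
            + (1/2 : ℝ) * qnorm (∑ i, γ i • ((B i)ᵀ * B i)) (ys - y 0)) / t := by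
  intro t ht
  have htR : (0 : ℝ) < t := by exact_mod_cast ht
  simp only [spec_eq_norm_toEuclideanOp] at hcle
  simp only [qnorm_sub, qnorm_smul, qnorm_one, qnorm_sum, qnorm_transpose_mul_self]
  simp only [mvec_transpose] at hinit hxup
  simp only [mvec_eq_toEuclideanOp] at hinit hxup hyup hlamup hsad₃ hsad₄ ⊢
  have hcL i : c i * (L i + γ i * ‖(A i).toEuclideanOp‖ ^ 2) < 1 :=
    mul_lt_one_of_lt_inv (hcpos i) (hcle i)
  have hfeas := eq_zero_of_forall_sum_inner_le fun l => (add_le_add_iff_left _).1 (hsad₄ l)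
  have hsub : ∀ k, HasSubgradientOn g domg (y k) (-(∑ i, ((B i).toEuclideanOp†) (lam k i)))
    | 0 => hinit
    | k + 1 => hasSubgradientOn_of_augmented_min hgconv hγ (hyup k).1 (hyup k).2 (hlamup k)
  have hgap l := lagrangian_ergodic_sub_le hξconv hfconv hgconv
    (fun k i => (hxup k i).1) (fun k => (hyup k).1) l
    (fun k => lagrangian_sub_objective_le_lyapunov_sub hγ hcpos hcL hξconv hfconv
      hfgrad hfLip (fun i => (hxup k i).1) hsad₁ hsad₂ (fun i => (hxup k i).2) (hsub k)
      (hsub (k + 1)) (hlamup k) hfeas l)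
    (fun k => lyapunov_nonneg hγ hcpos
      (fun i => mul_mul_opNorm_sq_le_one (hcpos i) (hcL i) (hfLip i)) _ _ _ _ _ _) ht
  have hsaddle := hsad₃ (xbar t) (ybar t)
    (fun i => hxbar t i ▸ (hξconv i).1.inv_natCast_smul_sum_Icc_mem (fun k => (hxup k i).1) ht)
    (hybar t ▸ hgconv.1.inv_natCast_smul_sum_Icc_mem (fun k => (hyup k).1) ht)
  simp only [hfeas, inner_zero_right, sum_const_zero, add_zero] at hsaddle
  simp only [hxbar t, hybar t] at hsaddle ⊢
  refine abs_le_and_sum_norm_mul_le htR (fun l => ?_) (by linarith)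
    (fun l hl => lyapunov_le hγ hl _ _ _ _ _)
  have := hgap l
  simp only [lagrangian, objective] at this
  linarith

/-- Theorem 2 of the paper, deterministic case: `O(1/t)` ergodic
convergence rates for PG-ADMM in both suboptimality and infeasibility.
Extended-real-valued proper closed convex functions `ξ_i` and `g` are modelled as
real-valued convex functions on their (closed, nonempty, convex) effective domains. -/
theorem pg_admm_rate
    {N : ℕ} {n m : Fin N → ℕ} {ny : ℕ}
    (A : ∀ i, Matrix (Fin (m i)) (Fin (n i)) ℝ)
    (B : ∀ i, Matrix (Fin (m i)) (Fin ny) ℝ)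
    (b : ∀ i, EuclideanSpace ℝ (Fin (m i)))
    (ξ : ∀ i, EuclideanSpace ℝ (Fin (n i)) → ℝ)
    (domξ : ∀ i, Set (EuclideanSpace ℝ (Fin (n i))))
    (f : ∀ i, EuclideanSpace ℝ (Fin (n i)) → ℝ)
    (f' : ∀ i, EuclideanSpace ℝ (Fin (n i)) → EuclideanSpace ℝ (Fin (n i)))
    (L : Fin N → ℝ)
    (g : EuclideanSpace ℝ (Fin ny) → ℝ)
    (domg : Set (EuclideanSpace ℝ (Fin ny)))
    (γ : Fin N → ℝ) (c : Fin N → ℝ)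
    (x : ℕ → ∀ i, EuclideanSpace ℝ (Fin (n i)))
    (y : ℕ → EuclideanSpace ℝ (Fin ny))
    (lam : ℕ → ∀ i, EuclideanSpace ℝ (Fin (m i)))
    (xbar : ℕ → ∀ i, EuclideanSpace ℝ (Fin (n i)))
    (ybar : ℕ → EuclideanSpace ℝ (Fin ny))
    -- ξ_i proper closed convex
    (hξconv : ∀ i, ConvexOn ℝ (domξ i) (ξ i))
    (hξlsc : ∀ i, LowerSemicontinuousOn (ξ i) (domξ i))
    (hξcl : ∀ i, IsClosed (domξ i))
    (hξne : ∀ i, (domξ i).Nonempty)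
    -- f_i convex with L_i-Lipschitz gradient
    (hfconv : ∀ i, ConvexOn ℝ Set.univ (f i))
    (hfgrad : ∀ i z, HasGradientAt (f i) (f' i z) z)
    (hfLip : ∀ i z w, ‖f' i z - f' i w‖ ≤ L i * ‖z - w‖)
    -- g proper closed convex
    (hgconv : ConvexOn ℝ domg g)
    (hglsc : LowerSemicontinuousOn g domg)
    (hgcl : IsClosed domg)
    (hgne : domg.Nonempty)
    -- parameters
    (hγ : ∀ i, 0 < γ i)
    (hcpos : ∀ i, 0 < c i)
    (hcle : ∀ i, c i < (L i + γ i * spec (A i) ^ 2)⁻¹)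
    -- initial condition: −Σ Bᵢᵀ λᵢ⁰ ∈ ∂g(y⁰)
    (hinit : y 0 ∈ domg ∧ ∀ z ∈ domg,
      g (y 0) + ⟪-(∑ i, mvec (B i)ᵀ (lam 0 i)), z - y 0⟫ ≤ g z)
    -- PG-ADMM x-update (proximal gradient step, δ_i^k = 0)
    (hxup : ∀ k i, x (k+1) i ∈ domξ i ∧ ∀ z ∈ domξ i,
      ξ i (x (k+1) i) + (2 * c i)⁻¹ *
        ‖x (k+1) i - (x k i - c i • (f' i (x k i) +
          mvec (A i)ᵀ (lam k i + γ i • (mvec (A i) (x k i) + mvec (B i) (y k) - b i))))‖ ^ 2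
      ≤ ξ i z + (2 * c i)⁻¹ *
        ‖z - (x k i - c i • (f' i (x k i) +
          mvec (A i)ᵀ (lam k i + γ i • (mvec (A i) (x k i) + mvec (B i) (y k) - b i))))‖ ^ 2)
    -- PG-ADMM y-update
    (hyup : ∀ k, y (k+1) ∈ domg ∧ ∀ z ∈ domg,
      g (y (k+1)) + ∑ i, γ i / 2 *
        ‖mvec (A i) (x (k+1) i) + mvec (B i) (y (k+1)) - b i + (γ i)⁻¹ • lam k i‖ ^ 2
      ≤ g z + ∑ i, γ i / 2 *
        ‖mvec (A i) (x (k+1) i) + mvec (B i) z - b i + (γ i)⁻¹ • lam k i‖ ^ 2)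
    -- PG-ADMM dual update
    (hlamup : ∀ k i, lam (k+1) i
      = lam k i + γ i • (mvec (A i) (x (k+1) i) + mvec (B i) (y (k+1)) - b i))
    -- ergodic averages
    (hxbar : ∀ t i, xbar t i = (t : ℝ)⁻¹ • ∑ k ∈ Finset.Icc 1 t, x k i)
    (hybar : ∀ t, ybar t = (t : ℝ)⁻¹ • ∑ k ∈ Finset.Icc 1 t, y k)
    -- (x*, y*, λ*) ∈ χ*, a saddle point of the Lagrangian
    (xs : ∀ i, EuclideanSpace ℝ (Fin (n i)))
    (ys : EuclideanSpace ℝ (Fin ny))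
    (ls : ∀ i, EuclideanSpace ℝ (Fin (m i)))
    (hsad₁ : ∀ i, xs i ∈ domξ i) (hsad₂ : ys ∈ domg)
    (hsad₃ : ∀ (x' : ∀ i, EuclideanSpace ℝ (Fin (n i))) (y' : EuclideanSpace ℝ (Fin ny)),
      (∀ i, x' i ∈ domξ i) → y' ∈ domg →
      g ys + ∑ i, (ξ i (xs i) + f i (xs i))
        + ∑ i, ⟪ls i, mvec (A i) (xs i) + mvec (B i) ys - b i⟫
      ≤ g y' + ∑ i, (ξ i (x' i) + f i (x' i))
        + ∑ i, ⟪ls i, mvec (A i) (x' i) + mvec (B i) y' - b i⟫)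
    (hsad₄ : ∀ l : ∀ i, EuclideanSpace ℝ (Fin (m i)),
      g ys + ∑ i, (ξ i (xs i) + f i (xs i))
        + ∑ i, ⟪l i, mvec (A i) (xs i) + mvec (B i) ys - b i⟫
      ≤ g ys + ∑ i, (ξ i (xs i) + f i (xs i))
        + ∑ i, ⟪ls i, mvec (A i) (xs i) + mvec (B i) ys - b i⟫) :
    ∀ t : ℕ, 1 ≤ t →
      |(g (ybar t) + ∑ i, (ξ i (xbar t i) + f i (xbar t i)))
          - (g ys + ∑ i, (ξ i (xs i) + f i (xs i)))|
        ≤ (∑ i, ((γ i)⁻¹ * (4 * ‖ls i‖ ^ 2 + ‖lam 0 i‖ ^ 2)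
              + (2 * c i)⁻¹ * qnorm (1 - (c i * γ i) • ((A i)ᵀ * A i)) (xs i - x 0 i))
            + (1/2 : ℝ) * qnorm (∑ i, γ i • ((B i)ᵀ * B i)) (ys - y 0)) / t
      ∧ ∑ i, ‖ls i‖ * ‖mvec (A i) (xbar t i) + mvec (B i) (ybar t) - b i‖
        ≤ (∑ i, ((γ i)⁻¹ * (4 * ‖ls i‖ ^ 2 + ‖lam 0 i‖ ^ 2)
              + (2 * c i)⁻¹ * qnorm (1 - (c i * γ i) • ((A i)ᵀ * A i)) (xs i - x 0 i))
            + (1/2 : ℝ) * qnorm (∑ i, γ i • ((B i)ᵀ * B i)) (ys - y 0)) / t :=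
  pg_admm_rate_general A B b ξ domξ f f' L g domg γ c x y lam xbar ybar hξconv hfconv hfgrad hfLip
    hgconv hγ hcpos hcle hinit hxup hyup hlamup hxbar hybar xs ys ls hsad₁ hsad₂ hsad₃ hsad₄
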